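/- Let M = {M_1, M_2} be a binary MMDP and π a stationary policy, and define W ∈ ℝ^{|S|×|S|} by W_{ij} = Σ_{a ∈ A_i} π(a|i)·√(δ_1(j|i,a)·δ_2(j|i,a)). Then for every state s ∈ S and every t ∈ ℕ, e_{s_init}ᵀ Wᵗ e_s = Σ_{h_t ∈ H_t : h_t(t) = s} √(P_1^π(h_t)·P_2^π(h_t)), where e_s denotes the standard basis vector indexed by s. -/

import Mathlib

open Finset Filter

/-- A history of length `t` of an MDP with states `S` and actions `A`:
a sequence of `t+1` states and `t` actions `(s₀, a₀, s₁, …, a_{t-1}, s_t)`. -/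
abbrev Hist (S A : Type) (t : ℕ) : Type := (Fin (t + 1) → S) × (Fin t → A)

/-- The last state of a history. -/
def lastState {S A : Type} {t : ℕ} (h : Hist S A t) : S := h.1 (Fin.last t)

/-- The length-`τ` prefix of a history of length `t` (for `τ < t`). -/
def prefixH {S A : Type} {t : ℕ} (h : Hist S A t) (τ : Fin t) : Hist S A τ.val :=
  (fun i => h.1 (Fin.castLE (Nat.succ_le_succ τ.isLt.le) i),
   fun i => h.2 (Fin.castLE τ.isLt.le i))

/-- A history-dependent randomized policy over the available-action map `act`:
for every time `t` and history `h` of length `t` it gives a probability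
distribution over the actions available at the last state of `h`. -/
structure Policy (S A : Type) [Fintype S] [Fintype A] (act : S → Finset A) where
  p : (t : ℕ) → Hist S A t → A → ℝ
  nonneg : ∀ (t : ℕ) (h : Hist S A t) (a : A), 0 ≤ p t h a
  sum_one : ∀ (t : ℕ) (h : Hist S A t), ∑ a ∈ act (lastState h), p t h a = 1
  zero_off : ∀ (t : ℕ) (h : Hist S A t), ∀ a ∉ act (lastState h), p t h a = 0

/-- The probability `P^π(h)` of a history `h` of length `t` under the transition kernel `δ`
    and (the underlying map `πf` of) a policy, starting from the initial state `init`. -/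
noncomputable def histProb {S A : Type} [Fintype S] [Fintype A] [DecidableEq S]
    (init : S) (δ : S → A → S → ℝ)
    (πf : (t : ℕ) → Hist S A t → A → ℝ) (t : ℕ) (h : Hist S A t) : ℝ :=
  (if h.1 0 = init then (1 : ℝ) else 0) *
    ∏ τ : Fin t,
      πf τ.val (prefixH h τ) (h.2 τ) * δ (h.1 τ.castSucc) (h.2 τ) (h.1 τ.succ)

/-- The Bhattacharyya coefficient at step `t` between the history distributions induced by
the kernels `δ1` and `δ2` under the policy map `πf`:
`B(t,π) = Σ_{h_t} √(P₁^π(h_t)·P₂^π(h_t))`. -/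
noncomputable def BC {S A : Type} [Fintype S] [Fintype A] [DecidableEq S]
    (init : S) (δ1 δ2 : S → A → S → ℝ)
    (πf : (t : ℕ) → Hist S A t → A → ℝ) (t : ℕ) : ℝ :=
  ∑ h : Hist S A t,
    Real.sqrt (histProb init δ1 πf t h * histProb init δ2 πf t h)

/-- A binary MMDP: two MDPs sharing the state space `S`, available actions `act`,
and initial state `init`, with transition kernels `δ 0` and `δ 1`. -/
structure BinMMDP (S A : Type) [Fintype S] [Fintype A] where
  act : S → Finset A
  act_nonempty : ∀ s, (act s).Nonempty
  init : S
  δ : Fin 2 → S → A → S → ℝ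
  δ_nonneg : ∀ i s a s', 0 ≤ δ i s a s'
  δ_sum : ∀ i s, ∀ a ∈ act s, ∑ s', δ i s a s' = 1

/-- A stationary (Markovian, time-independent) randomized policy: a distribution over the
available actions at each state. -/
structure StatPolicy (S A : Type) [Fintype S] [Fintype A] (act : S → Finset A) where
  p : S → A → ℝ
  nonneg : ∀ s a, 0 ≤ p s a
  sum_one : ∀ s, ∑ a ∈ act s, p s a = 1
  zero_off : ∀ s, ∀ a ∉ act s, p s a = 0

/-- The history-dependent policy map induced by a stationary policy: it acts according to
the distribution attached to the last state of the history. -/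
def StatPolicy.lift {S A : Type} [Fintype S] [Fintype A] {act : S → Finset A}
    (σ : StatPolicy S A act) : (t : ℕ) → Hist S A t → A → ℝ :=
  fun _ h a => σ.p (lastState h) a

open Matrix

/-!
Expanding `Wᵗ` as a sum over state paths and each entry of `W` as a sum over actions turns
the left side into a sum over histories whose terms are products of the per-step factors
`σ(a|i)·√(δ₁(j|i,a)·δ₂(j|i,a))`. On the right, the policy weight enters both path
probabilities, so `√(P₁ P₂)` factors stepwise into the same products since
`√(π² δ₁ δ₂) = π √(δ₁ δ₂)` for `π ≥ 0`.
-/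

theorem Matrix.vecMul_pow_apply_eq_sum_paths {R S : Type*} [CommSemiring R] [Fintype S]
    [DecidableEq S] (v : S → R) (W : Matrix S S R) (t : ℕ) (j : S) :
    (v ᵥ* W ^ t) j = ∑ f : Fin (t + 1) → S,
      if f (Fin.last t) = j then v (f 0) * ∏ τ : Fin t, W (f τ.castSucc) (f τ.succ) else 0 := by
  induction t generalizing j with
  | zero =>
    rw [pow_zero, vecMul_one, ← (Equiv.funUnique (Fin 1) S).symm.sum_comp]
    simp
  | succ t ih =>
    rw [pow_succ, ← vecMul_vecMul, vecMul, dotProduct]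
    simp_rw [ih, Finset.sum_mul]
    rw [Finset.sum_comm, ← (Fin.snocEquiv fun _ : Fin (t + 2) => S).sum_comp,
      Fintype.sum_prod_type_right]
    refine Finset.sum_congr rfl fun g _ => ?_
    have snoc_zero (x : S) : (Fin.snoc g x : Fin (t + 2) → S) 0 = g 0 :=
      Fin.snoc_castSucc (i := 0) ..
    simp [Fin.prod_univ_castSucc, Fin.succ_castSucc, -Fin.castSucc_succ, snoc_zero, mul_assoc]

theorem sqrt_histProb_mul_histProb {S A : Type} [Fintype S] [Fintype A] [DecidableEq S]
    (init : S) {δ₁ δ₂ : S → A → S → ℝ} (hδ₁ : ∀ s a s', 0 ≤ δ₁ s a s')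
    (hδ₂ : ∀ s a s', 0 ≤ δ₂ s a s') {πf : (t : ℕ) → Hist S A t → A → ℝ}
    (hπ : ∀ t h a, 0 ≤ πf t h a) (t : ℕ) (h : Hist S A t) :
    √(histProb init δ₁ πf t h * histProb init δ₂ πf t h) =
      (if h.1 0 = init then 1 else 0) * ∏ τ : Fin t, πf τ (prefixH h τ) (h.2 τ) *
        √(δ₁ (h.1 τ.castSucc) (h.2 τ) (h.1 τ.succ) * δ₂ (h.1 τ.castSucc) (h.2 τ) (h.1 τ.succ)) := by
  have step (π d₁ d₂ : ℝ) (hd₁ : 0 ≤ d₁) (hd₂ : 0 ≤ d₂) :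
      π * d₁ * (π * d₂) = (π * √(d₁ * d₂)) ^ 2 := by
    rw [mul_pow, Real.sq_sqrt (mul_nonneg hd₁ hd₂)]
    ring
  split_ifs with h0
  · rw [one_mul, histProb, histProb, if_pos h0, one_mul, one_mul, ← prod_mul_distrib,
      prod_congr rfl fun τ _ => step _ _ _ (hδ₁ ..) (hδ₂ ..), prod_pow]
    exact Real.sqrt_sq (prod_nonneg fun τ _ => mul_nonneg (hπ ..) (Real.sqrt_nonneg _))
  · simp [histProb, h0]

namespace StatPolicy

variable {S A : Type} [Fintype S] [Fintype A] {act : S → Finset A} (σ : StatPolicy S A act)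

theorem lift_nonneg (t : ℕ) (h : Hist S A t) (a : A) : 0 ≤ σ.lift t h a :=
  σ.nonneg _ a

theorem lift_prefixH {t : ℕ} (h : Hist S A t) (τ : Fin t) (a : A) :
    σ.lift τ (prefixH h τ) a = σ.p (h.1 τ.castSucc) a :=
  rfl

theorem sum_act_mul_eq_sum_univ (s : S) (g : A → ℝ) :
    ∑ a ∈ act s, σ.p s a * g a = ∑ a, σ.p s a * g a :=
  sum_subset (subset_univ _) fun a _ ha => by rw [σ.zero_off s a ha, zero_mul]

end StatPolicy

/-- For a binary MMDP `M`, a stationary policy `σ`, and the matrix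
`W_{ij} = Σ_{a ∈ A_i} σ(a|i)·√(δ₁(j|i,a)·δ₂(j|i,a))`, for every state `s` and every `t`,
`e_{s_init}ᵀ Wᵗ e_s = Σ_{h_t ∈ H_t, h_t(t)=s} √(P₁^σ(h_t)·P₂^σ(h_t))`. -/
theorem matrix_power_entry_eq_sum_over_histories
    {S A : Type} [Fintype S] [Fintype A] [DecidableEq S]
    (M : BinMMDP S A) (σ : StatPolicy S A M.act) (s : S) (t : ℕ) :
    dotProduct (Pi.single M.init 1)
        (((Matrix.of fun i j : S =>
            ∑ a ∈ M.act i, σ.p i a * Real.sqrt (M.δ 0 i a j * M.δ 1 i a j)) ^ t).mulVec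
          (Pi.single s 1))
      = ∑ h : Hist S A t,
          if lastState h = s then
            Real.sqrt (histProb M.init (M.δ 0) σ.lift t h *
              histProb M.init (M.δ 1) σ.lift t h)
          else 0 := by
  rw [dotProduct_mulVec, dotProduct_single_one, vecMul_pow_apply_eq_sum_paths,
    Fintype.sum_prod_type]
  refine sum_congr rfl fun f _ => ?_
  simp_rw [sqrt_histProb_mul_histProb M.init (M.δ_nonneg 0) (M.δ_nonneg 1) σ.lift_nonneg,
    lastState, σ.lift_prefixH, of_apply, σ.sum_act_mul_eq_sum_univ, Fintype.prod_sum,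
    Pi.single_apply]
  split_ifs <;> simp [mul_sum]
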